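/- arXiv:2112.15327 — 5 statements merged into one kernel-verified Lean document; each statement's English description precedes it below -/
import Mathlib

section
/- Let V be a t×t positive semidefinite Hermitian matrix whose last row and last column entries all equal v_{t,t} (i.e., v_{t,i} = v_{i,t} = v_{t,t} for all 1 ≤ i ≤ t). Then the standard basis vector e_t = (0,...,0,1)ᵀ minimizes the quadratic form ζᴴ V ζ over all complex vectors ζ satisfying 1ᵀζ = 1. -/
open Matrix ComplexOrder in
/-- Damping brings no MSE improvement when the last row and column of the
PSD Hermitian matrix `V` all equal `V (last) (last)`: the basis vector
`e_last` minimizes the quadratic form `ζᴴ V ζ` over `{ζ : 1ᵀζ = 1}`. -/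
theorem stmt0 (t : ℕ) (V : Matrix (Fin (t + 1)) (Fin (t + 1)) ℂ)
    (hV : V.PosSemidef)
    (hband : ∀ i, V (Fin.last t) i = V (Fin.last t) (Fin.last t) ∧
      V i (Fin.last t) = V (Fin.last t) (Fin.last t)) :
    ∀ ζ : Fin (t + 1) → ℂ, (∑ i, ζ i) = 1 →
      star (Pi.single (Fin.last t) (1 : ℂ)) ⬝ᵥ (V *ᵥ Pi.single (Fin.last t) (1 : ℂ))
        ≤ star ζ ⬝ᵥ (V *ᵥ ζ) := by
  intro ζ hζ
  set e : Fin (t + 1) → ℂ := Pi.single (Fin.last t) (1 : ℂ) with he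
  set c : ℂ := V (Fin.last t) (Fin.last t) with hc
  set w : Fin (t + 1) → ℂ := ζ - e with hw
  have hsum_e : (∑ i, e i) = 1 := by
    simp [he, Finset.sum_pi_single]
  have hsum_w : (∑ i, w i) = 0 := by
    simp [hw, Finset.sum_sub_distrib, hζ, hsum_e]
  have hze : ζ = e + w := by simp [hw]
  -- eᴴ V e = c
  have h1 : star e ⬝ᵥ (V *ᵥ e) = c := by
    simp [he, dotProduct, mulVec, Pi.single_apply, Finset.sum_ite_eq',
      apply_ite, hc]
  -- eᴴ V w = 0
  have h2 : star e ⬝ᵥ (V *ᵥ w) = 0 := by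
    have : star e ⬝ᵥ (V *ᵥ w) = ∑ j, V (Fin.last t) j * w j := by
      simp [he, dotProduct, mulVec, Pi.single_apply, apply_ite]
    rw [this]
    calc ∑ j, V (Fin.last t) j * w j = ∑ j, c * w j := by
          refine Finset.sum_congr rfl fun j _ => ?_
          rw [(hband j).1]
      _ = c * ∑ j, w j := by rw [Finset.mul_sum]
      _ = 0 := by rw [hsum_w, mul_zero]
  -- wᴴ V e = 0
  have h3 : star w ⬝ᵥ (V *ᵥ e) = 0 := by
    have : star w ⬝ᵥ (V *ᵥ e) = ∑ i, star (w i) * V i (Fin.last t) := by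
      simp [he, dotProduct, mulVec, Pi.single_apply, Finset.sum_ite_eq',
        mul_comm]
    rw [this]
    calc ∑ i, star (w i) * V i (Fin.last t) = ∑ i, star (w i) * c := by
          refine Finset.sum_congr rfl fun i _ => ?_
          rw [(hband i).2]
      _ = star (∑ i, w i) * c := by rw [← Finset.sum_mul, star_sum]
      _ = 0 := by rw [hsum_w, star_zero, zero_mul]
  have h4 : (0 : ℂ) ≤ star w ⬝ᵥ (V *ᵥ w) := hV.dotProduct_mulVec_nonneg w
  have hexp : star ζ ⬝ᵥ (V *ᵥ ζ) = c + star w ⬝ᵥ (V *ᵥ w) := by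
    rw [hze]
    simp only [star_add, mulVec_add, add_dotProduct, dotProduct_add]
    rw [h1, h2, h3]
    ring
  rw [h1, hexp]
  exact le_add_of_nonneg_right h4
end

section
/- Let V be a t×t L-banded matrix with diagonal values v_1, ..., v_t, i.e., V_{i,j} = v_{max(i,j)}. Define δ_i = v_i − v_{i+1} for 1 ≤ i ≤ t−1 and δ_t = v_t. Suppose all δ_i ≠ 0. Then V is invertible and its inverse is the tridiagonal matrix W with W_{i,i} = δ_{i-1}^{-1} + δ_i^{-1} (with the convention δ_0^{-1} = 0), W_{i,i+1} = W_{i+1,i} = −δ_i^{-1}, and W_{i,j} = 0 for |i−j| ≥ 2. -/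
/-- The L-banded matrix with diagonal values `v`: entry `(i,j)` is `v (max i j)`. -/
noncomputable def Lband (t : ℕ) (v : Fin (t + 1) → ℂ) : Matrix (Fin (t + 1)) (Fin (t + 1)) ℂ :=
  Matrix.of fun i j => v (max i j)

/-- `δ i = v i - v (i+1)` for `i < t`, and `δ t = v t`. -/
noncomputable def deltaL (t : ℕ) (v : Fin (t + 1) → ℂ) (i : Fin (t + 1)) : ℂ :=
  if h : (i : ℕ) < t then v i - v ⟨(i : ℕ) + 1, by omega⟩ else v i

/-- The tridiagonal candidate inverse of the L-banded matrix. -/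
noncomputable def Wtri (t : ℕ) (v : Fin (t + 1) → ℂ) : Matrix (Fin (t + 1)) (Fin (t + 1)) ℂ :=
  Matrix.of fun i j =>
    if i = j then
      (if 0 < (i : ℕ) then
        (deltaL t v ⟨(i : ℕ) - 1, lt_of_le_of_lt (Nat.sub_le _ _) i.isLt⟩)⁻¹ else 0)
        + (deltaL t v i)⁻¹
    else if (i : ℕ) + 1 = (j : ℕ) ∨ (j : ℕ) + 1 = (i : ℕ) then -(deltaL t v (min i j))⁻¹
    else 0

lemma Wtri_split (t : ℕ) (v : Fin (t + 1) → ℂ) (k j : Fin (t + 1)) :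
    Wtri t v k j =
      (if k = j then
        (if 0 < (j : ℕ) then
          (deltaL t v ⟨(j : ℕ) - 1, lt_of_le_of_lt (Nat.sub_le _ _) j.isLt⟩)⁻¹ else 0)
          + (deltaL t v j)⁻¹ else 0)
      + (if (k : ℕ) + 1 = (j : ℕ) then -(deltaL t v k)⁻¹ else 0)
      + (if (j : ℕ) + 1 = (k : ℕ) then -(deltaL t v j)⁻¹ else 0) := by
  by_cases hkj : k = j
  · subst hkj
    have h1 : ¬((k : ℕ) + 1 = (k : ℕ)) := by omega
    simp [Wtri, h1]
  · have hkj' : (k : ℕ) ≠ (j : ℕ) := fun h => hkj (Fin.ext h)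
    simp only [Wtri, Matrix.of_apply, if_neg hkj]
    by_cases h2 : (k : ℕ) + 1 = (j : ℕ)
    · have hmin : min k j = k := min_eq_left (le_of_lt (Fin.lt_def.mpr (by omega)))
      have h3 : ¬((j : ℕ) + 1 = (k : ℕ)) := by omega
      simp [h2, h3, hmin]
    · by_cases h3 : (j : ℕ) + 1 = (k : ℕ)
      · have hmin : min k j = j := min_eq_right (le_of_lt (Fin.lt_def.mpr (by omega)))
        simp [h2, h3, hmin]
      · simp [h2, h3]

lemma Lband_mul_Wtri (t : ℕ) (v : Fin (t + 1) → ℂ) (hδ : ∀ i, deltaL t v i ≠ 0) :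
    Lband t v * Wtri t v = 1 := by
  ext i j
  rw [Matrix.mul_apply, Matrix.one_apply]
  have hsplit : ∀ k : Fin (t + 1), Lband t v i k * Wtri t v k j =
      (if k = j then v (max i j) *
        ((if 0 < (j : ℕ) then
          (deltaL t v ⟨(j : ℕ) - 1, lt_of_le_of_lt (Nat.sub_le _ _) j.isLt⟩)⁻¹ else 0)
          + (deltaL t v j)⁻¹) else 0)
      + (if (k : ℕ) + 1 = (j : ℕ) then v (max i k) * -(deltaL t v k)⁻¹ else 0)
      + (if (j : ℕ) + 1 = (k : ℕ) then v (max i k) * -(deltaL t v j)⁻¹ else 0) := by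
    intro k
    rw [Wtri_split, mul_add, mul_add, mul_ite, mul_zero, mul_ite, mul_zero, mul_ite, mul_zero]
    congr 2
    split
    · next h => subst h; rfl
    · rfl
  rw [Finset.sum_congr rfl (fun k _ => hsplit k), Finset.sum_add_distrib,
    Finset.sum_add_distrib, Finset.sum_ite_eq' Finset.univ j, if_pos (Finset.mem_univ j)]
  by_cases hj0 : 0 < (j : ℕ)
  · -- subdiagonal term is at jp
    set jp : Fin (t + 1) := ⟨(j : ℕ) - 1, lt_of_le_of_lt (Nat.sub_le _ _) j.isLt⟩ with hjp
    have hcond : ∀ k : Fin (t + 1), ((k : ℕ) + 1 = (j : ℕ)) ↔ k = jp := by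
      intro k
      rw [Fin.ext_iff]
      simp only [hjp]
      omega
    simp only [hcond]
    rw [Finset.sum_ite_eq' Finset.univ jp, if_pos (Finset.mem_univ jp)]
    have hjpval : (jp : ℕ) = (j : ℕ) - 1 := rfl
    have hδp : deltaL t v jp = v jp - v j := by
      rw [deltaL, dif_pos (show (jp : ℕ) < t by omega)]
      congr 2
      exact Fin.ext (by simp only [hjpval]; omega)
    by_cases hjt : (j : ℕ) < t
    · set js : Fin (t + 1) := ⟨(j : ℕ) + 1, by omega⟩ with hjs
      have hcond2 : ∀ k : Fin (t + 1), ((j : ℕ) + 1 = (k : ℕ)) ↔ k = js := by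
        intro k; rw [Fin.ext_iff]; simp only [hjs]; omega
      simp only [hcond2]
      rw [Finset.sum_ite_eq' Finset.univ js, if_pos (Finset.mem_univ js)]
      have hδj : deltaL t v j = v j - v js := by rw [deltaL, dif_pos hjt]
      have hp := hδ jp
      have hj := hδ j
      rw [hδp] at hp ⊢
      rw [hδj] at hj ⊢
      rcases lt_trichotomy (i : ℕ) (j : ℕ) with hij | hij | hij
      · have h1 : max i j = j := max_eq_right (Fin.le_def.mpr (by omega))
        have h2 : max i jp = jp := max_eq_right (Fin.le_def.mpr (by simp only [hjpval]; omega))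
        have h3 : max i js = js := max_eq_right (Fin.le_def.mpr (by simp only [hjs]; omega))
        rw [h1, h2, h3, if_pos hj0, if_neg (show ¬ i = j from fun h => by subst h; omega)]
        field_simp
        ring
      · have hij' : i = j := Fin.ext hij
        subst hij'
        have h2 : max i jp = i := max_eq_left (Fin.le_def.mpr (by simp only [hjpval]; omega))
        have h3' : max i js = js := max_eq_right (Fin.le_def.mpr (by simp only [hjs]; omega))
        rw [max_self, h2, h3', if_pos hj0, if_pos rfl]
        field_simp
        ring
      · have h1 : max i j = i := max_eq_left (Fin.le_def.mpr (by omega))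
        have h2 : max i jp = i := max_eq_left (Fin.le_def.mpr (by simp only [hjpval]; omega))
        have h3 : max i js = i := max_eq_left (Fin.le_def.mpr (by simp only [hjs]; omega))
        rw [h1, h2, h3, if_pos hj0, if_neg (show ¬ i = j from fun h => by subst h; omega)]
        field_simp
        ring
    · -- j = t
      have hjt' : (j : ℕ) = t := by omega
      have hcond2 : ∀ k : Fin (t + 1), ¬((j : ℕ) + 1 = (k : ℕ)) := by
        intro k; have := k.isLt; omega
      simp only [hcond2, if_false, Finset.sum_const_zero]
      have hδj : deltaL t v j = v j := by rw [deltaL, dif_neg (by omega)]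
      have hp := hδ jp
      have hj := hδ j
      rw [hδp] at hp ⊢
      rw [hδj] at hj ⊢
      rcases lt_or_eq_of_le (show (i : ℕ) ≤ (j : ℕ) by have := i.isLt; omega) with hij | hij
      · have h1 : max i j = j := max_eq_right (Fin.le_def.mpr (by omega))
        have h2 : max i jp = jp := max_eq_right (Fin.le_def.mpr (by simp only [hjpval]; omega))
        rw [h1, h2, if_pos hj0, if_neg (show ¬ i = j from fun h => by subst h; omega)]
        field_simp
        ring
      · have hij' : i = j := Fin.ext hij
        subst hij'
        have h2 : max i jp = i := max_eq_left (Fin.le_def.mpr (by simp only [hjpval]; omega))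
        rw [max_self, h2, if_pos hj0, if_pos rfl]
        field_simp
        ring
  · -- j = 0
    have hj0' : (j : ℕ) = 0 := by omega
    have hcond : ∀ k : Fin (t + 1), ¬((k : ℕ) + 1 = (j : ℕ)) := by intro k; omega
    simp only [hcond, if_false, Finset.sum_const_zero, if_neg hj0, zero_add, add_zero]
    by_cases hjt : (j : ℕ) < t
    · set js : Fin (t + 1) := ⟨(j : ℕ) + 1, by omega⟩ with hjs
      have hcond2 : ∀ k : Fin (t + 1), ((j : ℕ) + 1 = (k : ℕ)) ↔ k = js := by
        intro k; rw [Fin.ext_iff]; simp only [hjs]; omega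
      simp only [hcond2]
      rw [Finset.sum_ite_eq' Finset.univ js, if_pos (Finset.mem_univ js)]
      have hδj : deltaL t v j = v j - v js := by rw [deltaL, dif_pos hjt]
      have hj := hδ j
      rw [hδj] at hj ⊢
      rcases Nat.eq_zero_or_pos (i : ℕ) with hij | hij
      · have hij' : i = j := Fin.ext (by omega)
        subst hij'
        have h3 : max i js = js := max_eq_right (Fin.le_def.mpr (by simp only [hjs]; omega))
        rw [max_self, h3, if_pos rfl]
        field_simp
        ring
      · have h1 : max i j = i := max_eq_left (Fin.le_def.mpr (by omega))
        have h3 : max i js = i := max_eq_left (Fin.le_def.mpr (by simp only [hjs]; omega))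
        rw [h1, h3, if_neg (show ¬ i = j from fun h => by subst h; omega)]
        field_simp
        ring
    · -- t = 0, i = j = 0
      have ht : t = 0 := by omega
      have hcond2 : ∀ k : Fin (t + 1), ¬((j : ℕ) + 1 = (k : ℕ)) := by
        intro k; have := k.isLt; omega
      simp only [hcond2, if_false, Finset.sum_const_zero, add_zero]
      have hij : i = j := Fin.ext (by have := i.isLt; omega)
      subst hij
      have hδj : deltaL t v i = v i := by rw [deltaL, dif_neg (by omega)]
      have hj := hδ i
      rw [hδj] at hj ⊢
      rw [max_self, if_pos rfl]
      field_simp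

/-- If all `δ i ≠ 0`, the L-banded matrix is invertible with tridiagonal inverse `Wtri`. -/
theorem stmt2 (t : ℕ) (v : Fin (t + 1) → ℂ) (hδ : ∀ i, deltaL t v i ≠ 0) :
    IsUnit (Lband t v).det ∧ (Lband t v)⁻¹ = Wtri t v := by
  have h := Lband_mul_Wtri t v hδ
  exact ⟨Matrix.isUnit_det_of_right_inverse h, Matrix.inv_eq_right_inv h⟩
end

section
/- Let x be a complex random variable and n_t ∈ ℂᵗ a zero-mean random vector with invertible covariance matrix V_t = E[n_t* n_tᵀ], independent structure not required. Define s_t = ζᵀ z_t where z_t = x·1 + n_t and ζ = V_t⁻¹1 / (1ᵀ V_t⁻¹ 1). Then for every i with 1 ≤ i ≤ t, E[(s_t − x)* n_i] = E[|s_t − x|²] = 1/(1ᵀ V_t⁻¹ 1). -/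
open Matrix MeasureTheory ComplexOrder in
/-- The optimally damped combination `s = ζᵀ(x·1 + n)` with
`ζ = V⁻¹1/(1ᵀV⁻¹1)` satisfies `E[(s-x)* nᵢ] = E[|s-x|²] = 1/(1ᵀV⁻¹1)`. -/
theorem stmt7 {Ω : Type*} [MeasurableSpace Ω] (μ : MeasureTheory.Measure Ω)
    [IsProbabilityMeasure μ]
    (t : ℕ) (x : Ω → ℂ) (n : Fin (t + 1) → Ω → ℂ)
    (V : Matrix (Fin (t + 1)) (Fin (t + 1)) ℂ)
    (hmean : ∀ i, ∫ ω, n i ω ∂μ = 0)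
    (hint : ∀ i j, Integrable (fun ω => star (n i ω) * n j ω) μ)
    (hcov : ∀ i j, V i j = ∫ ω, star (n i ω) * n j ω ∂μ)
    (hV : V.PosDef) :
    ∀ i,
      (∫ ω, star ((∑ k, ((∑ j, V⁻¹ k j) / ∑ k', ∑ j, V⁻¹ k' j) * (x ω + n k ω)) - x ω)
          * n i ω ∂μ) = 1 / (∑ k', ∑ j, V⁻¹ k' j) ∧
      (∫ ω, star ((∑ k, ((∑ j, V⁻¹ k j) / ∑ k', ∑ j, V⁻¹ k' j) * (x ω + n k ω)) - x ω)
          * ((∑ k, ((∑ j, V⁻¹ k j) / ∑ k', ∑ j, V⁻¹ k' j) * (x ω + n k ω)) - x ω) ∂μ)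
        = 1 / (∑ k', ∑ j, V⁻¹ k' j) := by
  classical
  set c : ℂ := ∑ k', ∑ j, V⁻¹ k' j with hc_def
  set ζ : Fin (t + 1) → ℂ := fun k => (∑ j, V⁻¹ k j) / c with hζ_def
  have hherm : V.IsHermitian := hV.1
  have hinv_herm : (V⁻¹).IsHermitian := hherm.inv
  have hmul : V⁻¹ * V = 1 := nonsing_inv_mul V hV.det_pos.ne'.isUnit
  have hc_star : star c = c := by
    rw [hc_def]
    simp only [star_sum]
    rw [Finset.sum_comm]
    exact Finset.sum_congr rfl fun k _ => Finset.sum_congr rfl fun j _ =>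
      hinv_herm.apply k j
  have hc_ne : c ≠ 0 := by
    have h1 : (1 : Fin (t + 1) → ℂ) ≠ 0 := by
      intro h
      exact one_ne_zero (congrFun h 0)
    have h2 := hV.inv.dotProduct_mulVec_pos (x := (1 : Fin (t + 1) → ℂ)) h1
    have hform : star (1 : Fin (t + 1) → ℂ) ⬝ᵥ (V⁻¹ *ᵥ 1) = c := by
      simp [dotProduct, mulVec, hc_def]
    rw [hform] at h2
    exact h2.ne'
  have hζ_sum : ∑ k, ζ k = 1 := by
    rw [hζ_def]
    simp only
    rw [← Finset.sum_div, ← hc_def, div_self hc_ne]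
  -- key algebraic identity : ζᴴ V = (1/c) 1ᵀ
  have hkey : ∀ i, ∑ k, star (ζ k) * V k i = 1 / c := by
    intro i
    have hstar : ∀ k, star (ζ k) = (∑ j, V⁻¹ j k) / c := by
      intro k
      rw [hζ_def]
      simp only [star_div₀, star_sum, hc_star]
      congr 1
      exact Finset.sum_congr rfl fun j _ => hinv_herm.apply j k
    have hone : ∑ k, ∑ j, V⁻¹ j k * V k i = 1 := by
      rw [Finset.sum_comm]
      have : ∀ j, ∑ k, V⁻¹ j k * V k i = (V⁻¹ * V) j i := fun j =>
        (Matrix.mul_apply).symm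
      simp only [this, hmul, Matrix.one_apply]
      simp
    calc ∑ k, star (ζ k) * V k i
        = ∑ k, (∑ j, V⁻¹ j k * V k i) / c := by
          refine Finset.sum_congr rfl fun k _ => ?_
          rw [hstar, div_mul_eq_mul_div, Finset.sum_mul]
      _ = (∑ k, ∑ j, V⁻¹ j k * V k i) / c := by rw [Finset.sum_div]
      _ = 1 / c := by rw [hone]
  -- pointwise reduction
  have hreduce : ∀ ω, (∑ k, ζ k * (x ω + n k ω)) - x ω = ∑ k, ζ k * n k ω := by
    intro ω
    simp only [mul_add, Finset.sum_add_distrib, ← Finset.sum_mul, hζ_sum, one_mul]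
    ring
  intro i
  constructor
  · -- first integral
    have hpt : ∀ ω, star ((∑ k, ζ k * (x ω + n k ω)) - x ω) * n i ω
        = ∑ k, star (ζ k) * (star (n k ω) * n i ω) := by
      intro ω
      rw [hreduce, star_sum, Finset.sum_mul]
      exact Finset.sum_congr rfl fun k _ => by rw [star_mul']; ring
    calc (∫ ω, star ((∑ k, ζ k * (x ω + n k ω)) - x ω) * n i ω ∂μ)
        = ∫ ω, ∑ k, star (ζ k) * (star (n k ω) * n i ω) ∂μ := by
          exact integral_congr_ae (Filter.Eventually.of_forall hpt)
      _ = ∑ k, ∫ ω, star (ζ k) * (star (n k ω) * n i ω) ∂μ := by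
          exact integral_finset_sum _ fun k _ => (hint k i).const_mul _
      _ = ∑ k, star (ζ k) * V k i := by
          refine Finset.sum_congr rfl fun k _ => ?_
          rw [integral_const_mul, ← hcov]
      _ = 1 / c := hkey i
  · -- second integral
    have hpt : ∀ ω, star ((∑ k, ζ k * (x ω + n k ω)) - x ω)
        * ((∑ k, ζ k * (x ω + n k ω)) - x ω)
        = ∑ k, ∑ l, (star (ζ k) * ζ l) * (star (n k ω) * n l ω) := by
      intro ω
      rw [hreduce, star_sum, Finset.sum_mul_sum]
      refine Finset.sum_congr rfl fun k _ => Finset.sum_congr rfl fun l _ => ?_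
      rw [star_mul']; ring
    calc (∫ ω, star ((∑ k, ζ k * (x ω + n k ω)) - x ω)
            * ((∑ k, ζ k * (x ω + n k ω)) - x ω) ∂μ)
        = ∫ ω, ∑ k, ∑ l, (star (ζ k) * ζ l) * (star (n k ω) * n l ω) ∂μ := by
          exact integral_congr_ae (Filter.Eventually.of_forall hpt)
      _ = ∑ k, ∑ l, ∫ ω, (star (ζ k) * ζ l) * (star (n k ω) * n l ω) ∂μ := by
          rw [integral_finset_sum _ fun k _ =>
            integrable_finset_sum _ fun l _ => (hint k l).const_mul _]
          exact Finset.sum_congr rfl fun k _ =>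
            integral_finset_sum _ fun l _ => (hint k l).const_mul _
      _ = ∑ k, ∑ l, (star (ζ k) * ζ l) * V k l := by
          refine Finset.sum_congr rfl fun k _ => Finset.sum_congr rfl fun l _ => ?_
          rw [integral_const_mul, ← hcov]
      _ = ∑ l, ζ l * ∑ k, star (ζ k) * V k l := by
          rw [Finset.sum_comm]
          refine Finset.sum_congr rfl fun l _ => ?_
          rw [Finset.mul_sum]
          exact Finset.sum_congr rfl fun k _ => by ring
      _ = 1 / c := by
          simp only [hkey, ← Finset.sum_mul, hζ_sum, one_mul]
end

section
/- Let x be a real random variable with density p(x), and let s_t = x·1 + n_t in ℝᵗ where n_t ~ N(0, V_t) is Gaussian independent of x with V_t invertible. Then the conditional density p(x | s_t) depends on s_t only through its last coordinate s_t(t) — i.e., p(x | s_1,...,s_t) = p(x | s_t) for all observation vectors — if and only if V_t⁻¹ 1 = (0,...,0, v_{t,t}^{-1})ᵀ, equivalently v_{t,i} = v_{i,t} = v_{t,t} for all 1 ≤ i ≤ t. -/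
open Matrix MeasureTheory

private def Afun {n : ℕ} (W : Matrix (Fin n) (Fin n) ℝ) (s : Fin n → ℝ) : ℝ :=
  ∑ i, ∑ j, s i * W i j * s j

private def Bfun {n : ℕ} (W : Matrix (Fin n) (Fin n) ℝ) (s : Fin n → ℝ) : ℝ :=
  ∑ i, ∑ j, (s i + s j) * W i j

private def Cfun {n : ℕ} (W : Matrix (Fin n) (Fin n) ℝ) : ℝ :=
  ∑ i, ∑ j, W i j

private lemma sum_expand {n : ℕ} (W : Matrix (Fin n) (Fin n) ℝ) (s : Fin n → ℝ) (x : ℝ) :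
    ∑ i, ∑ j, (s i - x) * W i j * (s j - x)
      = Afun W s - Bfun W s * x + Cfun W * x ^ 2 := by
  unfold Afun Bfun Cfun
  rw [Finset.sum_mul, Finset.sum_mul, ← Finset.sum_sub_distrib, ← Finset.sum_add_distrib]
  refine Finset.sum_congr rfl fun i _ => ?_
  rw [Finset.sum_mul, Finset.sum_mul, ← Finset.sum_sub_distrib, ← Finset.sum_add_distrib]
  exact Finset.sum_congr rfl fun j _ => by ring

private lemma B_val {n : ℕ} (W : Matrix (Fin n) (Fin n) ℝ) (hsym : ∀ i j, W i j = W j i)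
    (s : Fin n → ℝ) :
    Bfun W s = 2 * ∑ i, s i * (W *ᵥ fun _ => 1) i := by
  have h1 : ∀ i, (W *ᵥ fun _ => (1:ℝ)) i = ∑ j, W i j := by
    intro i; simp [Matrix.mulVec, dotProduct]
  have e1 : ∑ i, ∑ j, s i * W i j = ∑ i, s i * (W *ᵥ fun _ => 1) i := by
    refine Finset.sum_congr rfl fun i _ => ?_
    rw [h1, Finset.mul_sum]
  have e2 : ∑ i, ∑ j, s j * W i j = ∑ i, s i * (W *ᵥ fun _ => 1) i := by
    rw [Finset.sum_comm]
    refine Finset.sum_congr rfl fun j _ => ?_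
    rw [h1, Finset.mul_sum]
    exact Finset.sum_congr rfl fun i _ => by rw [hsym i j]
  calc Bfun W s
      = (∑ i, ∑ j, s i * W i j) + ∑ i, ∑ j, s j * W i j := by
        unfold Bfun
        rw [← Finset.sum_add_distrib]
        refine Finset.sum_congr rfl fun i _ => ?_
        rw [← Finset.sum_add_distrib]
        exact Finset.sum_congr rfl fun j _ => by ring
    _ = 2 * ∑ i, s i * (W *ᵥ fun _ => 1) i := by rw [e1, e2]; ring

private lemma int_pos (a A B : ℝ) (ha : 0 < a) :
    0 < ∫ y : ℝ, Real.exp (-(a * y ^ 2 - B * y + A)) := by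
  have key : ∀ y : ℝ, Real.exp (-(a * y ^ 2 - B * y + A))
      = Real.exp (B ^ 2 / (4 * a) - A) * Real.exp (-a * (y + -B / (2 * a)) ^ 2) := by
    intro y
    rw [← Real.exp_add]
    congr 1
    field_simp
    ring
  simp only [key]
  rw [MeasureTheory.integral_const_mul,
    integral_add_right_eq_self (fun u => Real.exp (-a * u ^ 2)) (-B / (2 * a)),
    integral_gaussian]
  have : (0:ℝ) < Real.sqrt (Real.pi / a) := Real.sqrt_pos.mpr (div_pos Real.pi_pos ha)
  positivity

open Matrix in
/-- For Gaussian observations `s = x·1 + n`, `n ~ N(0,V)`, the posterior of `x`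
depends on the observations only through the last coordinate — for every prior
density — if and only if `V⁻¹1 = (0,…,0,v_{t,t}⁻¹)ᵀ`, equivalently the last row
and column of `V` are constant. -/
theorem stmt8 (t : ℕ) (V : Matrix (Fin (t + 1)) (Fin (t + 1)) ℝ) (hV : V.PosDef) :
    (∀ p : ℝ → ℝ, (∀ x, 0 ≤ p x) →
      ∀ s s' : Fin (t + 1) → ℝ, s (Fin.last t) = s' (Fin.last t) → ∀ x : ℝ,
        p x * Real.exp (-(∑ i, ∑ j, (s i - x) * V⁻¹ i j * (s j - x))) /
            (∫ y : ℝ, p y * Real.exp (-(∑ i, ∑ j, (s i - y) * V⁻¹ i j * (s j - y)))) =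
          p x * Real.exp (-(∑ i, ∑ j, (s' i - x) * V⁻¹ i j * (s' j - x))) /
            (∫ y : ℝ, p y * Real.exp (-(∑ i, ∑ j, (s' i - y) * V⁻¹ i j * (s' j - y)))))
      ↔ V⁻¹ *ᵥ (fun _ => 1) =
          Pi.single (Fin.last t) (V (Fin.last t) (Fin.last t))⁻¹ := by
  have hW : (V⁻¹).PosDef := hV.inv
  have hsym : ∀ i j, V⁻¹ i j = V⁻¹ j i := fun i j => (hV.1.inv.apply i j).symm
  set W := V⁻¹ with hWdef
  set w : Fin (t+1) → ℝ := W *ᵥ (fun _ => 1) with hw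
  set C : ℝ := Cfun W with hC
  have hCpos : 0 < C := by
    have h1 : (fun _ => (1:ℝ) : Fin (t+1) → ℝ) ≠ 0 := by
      intro h
      have := congrFun h (Fin.last t)
      norm_num at this
    have h2 := hW.dotProduct_mulVec_pos h1
    have e : star (fun _ => (1:ℝ)) ⬝ᵥ W *ᵥ (fun _ => (1:ℝ)) = C := by
      simp [dotProduct, Matrix.mulVec, hC, Cfun]
    rwa [e] at h2
  have hVW : V * W = 1 := Matrix.mul_nonsing_inv V hV.det_pos.ne'.isUnit
  constructor
  · intro h
    -- Step 1: extract that Bfun depends only on the last coordinate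
    have hBkey : ∀ s s' : Fin (t+1) → ℝ, s (Fin.last t) = s' (Fin.last t) →
        Bfun W s = Bfun W s' := by
      intro s s' hss
      have hpnn : ∀ x : ℝ, 0 ≤ Real.exp (-(x ^ 2)) := fun x => (Real.exp_pos _).le
      have hnum : ∀ (u : Fin (t+1) → ℝ) (x : ℝ),
          Real.exp (-(x ^ 2)) * Real.exp (-(∑ i, ∑ j, (u i - x) * W i j * (u j - x)))
            = Real.exp (-((1 + C) * x ^ 2 - Bfun W u * x + Afun W u)) := by
        intro u x
        rw [← Real.exp_add, sum_expand]
        congr 1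
        rw [hC]
        ring
      have hint : ∀ u : Fin (t+1) → ℝ,
          (∫ y : ℝ, Real.exp (-(y ^ 2)) *
              Real.exp (-(∑ i, ∑ j, (u i - y) * W i j * (u j - y))))
            = ∫ y : ℝ, Real.exp (-((1 + C) * y ^ 2 - Bfun W u * y + Afun W u)) := by
        intro u
        exact integral_congr_ae (Filter.Eventually.of_forall fun y => hnum u y)
      have hDpos : ∀ u : Fin (t+1) → ℝ,
          0 < ∫ y : ℝ, Real.exp (-(y ^ 2)) *
              Real.exp (-(∑ i, ∑ j, (u i - y) * W i j * (u j - y))) := by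
        intro u
        rw [hint u]
        exact int_pos _ _ _ (by linarith)
      have key := h (fun x => Real.exp (-(x ^ 2))) hpnn s s' hss
      set Ds : ℝ := ∫ y : ℝ, Real.exp (-(y ^ 2)) *
          Real.exp (-(∑ i, ∑ j, (s i - y) * W i j * (s j - y))) with hDs
      set Ds' : ℝ := ∫ y : ℝ, Real.exp (-(y ^ 2)) *
          Real.exp (-(∑ i, ∑ j, (s' i - y) * W i j * (s' j - y))) with hDs'
      have key2 : ∀ x : ℝ,
          Real.exp (-((1 + C) * x ^ 2 - Bfun W s * x + Afun W s)) * Ds'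
            = Real.exp (-((1 + C) * x ^ 2 - Bfun W s' * x + Afun W s')) * Ds := by
        intro x
        have k := key x
        rw [hnum s x, hnum s' x] at k
        exact (div_eq_div_iff (hDpos s).ne' (hDpos s').ne').mp k
      have k0 := key2 0
      have k1 := key2 1
      have hcancel : Real.exp (-((1 + C) * 1 ^ 2 - Bfun W s * 1 + Afun W s)) *
            Real.exp (-((1 + C) * 0 ^ 2 - Bfun W s' * 0 + Afun W s'))
          = Real.exp (-((1 + C) * 1 ^ 2 - Bfun W s' * 1 + Afun W s')) *
            Real.exp (-((1 + C) * 0 ^ 2 - Bfun W s * 0 + Afun W s)) := by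
        refine mul_right_cancel₀ (hDpos s').ne' ?_
        calc Real.exp (-((1 + C) * 1 ^ 2 - Bfun W s * 1 + Afun W s)) *
              Real.exp (-((1 + C) * 0 ^ 2 - Bfun W s' * 0 + Afun W s')) * Ds'
            = Real.exp (-((1 + C) * 0 ^ 2 - Bfun W s' * 0 + Afun W s')) *
              (Real.exp (-((1 + C) * 1 ^ 2 - Bfun W s * 1 + Afun W s)) * Ds') := by ring
          _ = Real.exp (-((1 + C) * 0 ^ 2 - Bfun W s' * 0 + Afun W s')) *
              (Real.exp (-((1 + C) * 1 ^ 2 - Bfun W s' * 1 + Afun W s')) * Ds) := by rw [k1]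
          _ = Real.exp (-((1 + C) * 1 ^ 2 - Bfun W s' * 1 + Afun W s')) *
              (Real.exp (-((1 + C) * 0 ^ 2 - Bfun W s' * 0 + Afun W s')) * Ds) := by ring
          _ = Real.exp (-((1 + C) * 1 ^ 2 - Bfun W s' * 1 + Afun W s')) *
              (Real.exp (-((1 + C) * 0 ^ 2 - Bfun W s * 0 + Afun W s)) * Ds') := by rw [← k0]
          _ = Real.exp (-((1 + C) * 1 ^ 2 - Bfun W s' * 1 + Afun W s')) *
              Real.exp (-((1 + C) * 0 ^ 2 - Bfun W s * 0 + Afun W s)) * Ds' := by ring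
      rw [← Real.exp_add, ← Real.exp_add] at hcancel
      have hexp := Real.exp_injective hcancel
      nlinarith [hexp]
    -- Step 2: entries of w other than the last vanish
    have hzero : ∀ k : Fin (t+1), k ≠ Fin.last t → w k = 0 := by
      intro k hk
      have hs : (Pi.single k 1 : Fin (t+1) → ℝ) (Fin.last t)
          = (0 : Fin (t+1) → ℝ) (Fin.last t) := by
        simp [Pi.single_eq_of_ne (Ne.symm hk)]
      have hB := hBkey (Pi.single k 1) 0 hs
      rw [B_val W hsym, B_val W hsym] at hB
      simp only [Pi.zero_apply, zero_mul, Finset.sum_const_zero, mul_zero, ← hw] at hB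
      have e : ∑ i, (Pi.single k 1 : Fin (t+1) → ℝ) i * w i = w k := by
        rw [Finset.sum_eq_single k]
        · simp
        · intro b _ hb; simp [Pi.single_eq_of_ne hb]
        · simp
      rw [e] at hB
      linarith
    -- Step 3: the last entry equals v⁻¹
    have hid : V *ᵥ w = fun _ => (1:ℝ) := by
      rw [hw, Matrix.mulVec_mulVec, hVW, Matrix.one_mulVec]
    have hcomp : ∑ j, V (Fin.last t) j * w j = 1 := by
      have := congrFun hid (Fin.last t)
      simpa [Matrix.mulVec, dotProduct] using this
    have hlast : V (Fin.last t) (Fin.last t) * w (Fin.last t) = 1 := by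
      rw [Finset.sum_eq_single (Fin.last t)] at hcomp
      · exact hcomp
      · intro b _ hb
        rw [hzero b hb, mul_zero]
      · simp
    funext i
    by_cases hi : i = Fin.last t
    · subst hi
      rw [Pi.single_eq_same]
      have hv : V (Fin.last t) (Fin.last t) ≠ 0 := by
        intro h0
        rw [h0, zero_mul] at hlast
        norm_num at hlast
      field_simp
      linarith [hlast]
    · rw [hzero i hi, Pi.single_eq_of_ne hi]
  · -- reverse direction
    intro hWone p hpnn s s' hss x
    set v : ℝ := (V (Fin.last t) (Fin.last t))⁻¹ with hv
    have hBs : ∀ u : Fin (t+1) → ℝ, Bfun W u = 2 * (v * u (Fin.last t)) := by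
      intro u
      rw [B_val W hsym u]
      rw [← hw, hWone]
      congr 1
      rw [Finset.sum_eq_single (Fin.last t)]
      · rw [Pi.single_eq_same]; ring
      · intro b _ hb; rw [Pi.single_eq_of_ne hb, mul_zero]
      · simp
    have hnum : ∀ (u : Fin (t+1) → ℝ) (y : ℝ),
        p y * Real.exp (-(∑ i, ∑ j, (u i - y) * W i j * (u j - y)))
          = Real.exp (-(Afun W u)) *
            (p y * Real.exp (2 * (v * u (Fin.last t)) * y - C * y ^ 2)) := by
      intro u y
      rw [sum_expand, hBs u]
      have e : Real.exp (-(Afun W u - 2 * (v * u (Fin.last t)) * y + Cfun W * y ^ 2))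
          = Real.exp (-(Afun W u)) *
            Real.exp (2 * (v * u (Fin.last t)) * y - C * y ^ 2) := by
        rw [← Real.exp_add]
        congr 1
        rw [hC]
        ring
      rw [e]
      ring
    have hint : ∀ u : Fin (t+1) → ℝ,
        (∫ y : ℝ, p y * Real.exp (-(∑ i, ∑ j, (u i - y) * W i j * (u j - y))))
          = Real.exp (-(Afun W u)) *
            ∫ y : ℝ, p y * Real.exp (2 * (v * u (Fin.last t)) * y - C * y ^ 2) := by
      intro u
      rw [← MeasureTheory.integral_const_mul]
      exact integral_congr_ae (Filter.Eventually.of_forall fun y => hnum u y)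
    rw [hnum s x, hnum s' x, hint s, hint s', hss]
    rw [mul_div_mul_left _ _ (Real.exp_ne_zero _), mul_div_mul_left _ _ (Real.exp_ne_zero _)]
end

section
/- Let z_t = x·1 + ñ_t in ℂᵗ with ñ_t zero-mean and invertible covariance Ṽ_t. Define recursively s_i = ζ_iᵀ z_{1:i} with ζ_i = Ṽ_i⁻¹1/(1ᵀṼ_i⁻¹1) for 1 ≤ i ≤ t, where Ṽ_i is the top-left i×i block of Ṽ_t. Then the error vector n_t = (s_1 − x, ..., s_t − x) has an L-banded covariance matrix V_t, i.e., E[(s_τ − x)*(s_i − x)] = E[|s_τ − x|²] for all i ≤ τ ≤ t. -/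
/-- The top-left `(k+1)×(k+1)` block of a `(t+1)×(t+1)` matrix. -/
noncomputable def ssBlock (t : ℕ) (Vt : Matrix (Fin (t + 1)) (Fin (t + 1)) ℂ)
    (k : Fin (t + 1)) : Matrix (Fin ((k : ℕ) + 1)) (Fin ((k : ℕ) + 1)) ℂ :=
  Matrix.of fun a b => Vt (Fin.castLE k.isLt a) (Fin.castLE k.isLt b)

/-- The optimal damping vector `Ṽ_k⁻¹1 / (1ᵀṼ_k⁻¹1)` for the `k`-th block. -/
noncomputable def ssZeta (t : ℕ) (Vt : Matrix (Fin (t + 1)) (Fin (t + 1)) ℂ)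
    (k : Fin (t + 1)) (a : Fin ((k : ℕ) + 1)) : ℂ :=
  (∑ b, (ssBlock t Vt k)⁻¹ a b) / ∑ a', ∑ b, (ssBlock t Vt k)⁻¹ a' b

open MeasureTheory Finset

section Aux

variable {Ω : Type*} [MeasurableSpace Ω] {μ : Measure Ω} {t : ℕ}
  {ntil : Fin (t + 1) → Ω → ℂ}

/-- Integrability of products of weighted sums of the noise. -/
lemma ss_key_int (hint : ∀ i j, Integrable (fun ω => star (ntil i ω) * ntil j ω) μ)
    {ι κ : Type*} [Fintype ι] [Fintype κ] (p : ι → ℂ) (q : κ → ℂ)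
    (A : ι → Fin (t + 1)) (B : κ → Fin (t + 1)) :
    Integrable (fun ω => star (∑ a, p a * ntil (A a) ω) * (∑ b, q b * ntil (B b) ω)) μ := by
  have heq : (fun ω => star (∑ a, p a * ntil (A a) ω) * (∑ b, q b * ntil (B b) ω))
      = fun ω => ∑ a, ∑ b, (star (p a) * q b) * (star (ntil (A a) ω) * ntil (B b) ω) := by
    funext ω
    rw [star_sum, Finset.sum_mul_sum]
    refine Finset.sum_congr rfl fun a _ => Finset.sum_congr rfl fun b _ => ?_
    rw [star_mul']
    ring
  rw [heq]
  exact integrable_finset_sum _ fun a _ =>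
    integrable_finset_sum _ fun b _ => (hint (A a) (B b)).const_mul _

/-- Value of the covariance of weighted sums of the noise. -/
lemma ss_key_val {Vt : Matrix (Fin (t + 1)) (Fin (t + 1)) ℂ}
    (hint : ∀ i j, Integrable (fun ω => star (ntil i ω) * ntil j ω) μ)
    (hcov : ∀ i j, Vt i j = ∫ ω, star (ntil i ω) * ntil j ω ∂μ)
    {ι κ : Type*} [Fintype ι] [Fintype κ] (p : ι → ℂ) (q : κ → ℂ)
    (A : ι → Fin (t + 1)) (B : κ → Fin (t + 1)) :
    ∫ ω, star (∑ a, p a * ntil (A a) ω) * (∑ b, q b * ntil (B b) ω) ∂μ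
      = ∑ a, ∑ b, star (p a) * q b * Vt (A a) (B b) := by
  have heq : (fun ω => star (∑ a, p a * ntil (A a) ω) * (∑ b, q b * ntil (B b) ω))
      = fun ω => ∑ a, ∑ b, (star (p a) * q b) * (star (ntil (A a) ω) * ntil (B b) ω) := by
    funext ω
    rw [star_sum, Finset.sum_mul_sum]
    refine Finset.sum_congr rfl fun a _ => Finset.sum_congr rfl fun b _ => ?_
    rw [star_mul']
    ring
  rw [heq, integral_finset_sum _ fun a _ => integrable_finset_sum _ fun b _ =>
    (hint (A a) (B b)).const_mul _]
  refine Finset.sum_congr rfl fun a _ => ?_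
  rw [integral_finset_sum _ fun b _ => (hint (A a) (B b)).const_mul _]
  refine Finset.sum_congr rfl fun b _ => ?_
  rw [integral_const_mul, hcov]

end Aux

open MeasureTheory in
/-- Step-by-step optimal damping yields an L-banded error covariance:
`E[(s_τ - x)*(s_i - x)] = E[|s_τ - x|²]` for all `i ≤ τ`. -/
theorem stmt12 {Ω : Type*} [MeasurableSpace Ω] (μ : Measure Ω)
    [IsProbabilityMeasure μ] (t : ℕ) (x : Ω → ℂ) (ntil : Fin (t + 1) → Ω → ℂ)
    (Vt : Matrix (Fin (t + 1)) (Fin (t + 1)) ℂ)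
    (hmean : ∀ i, ∫ ω, ntil i ω ∂μ = 0)
    (hint : ∀ i j, Integrable (fun ω => star (ntil i ω) * ntil j ω) μ)
    (hcov : ∀ i j, Vt i j = ∫ ω, star (ntil i ω) * ntil j ω ∂μ)
    (hinv : ∀ k : Fin (t + 1), IsUnit (ssBlock t Vt k).det) :
    ∀ i τ : Fin (t + 1), i ≤ τ →
      (∫ ω, star ((∑ a, ssZeta t Vt τ a * (x ω + ntil (Fin.castLE τ.isLt a) ω)) - x ω) *
          ((∑ a, ssZeta t Vt i a * (x ω + ntil (Fin.castLE i.isLt a) ω)) - x ω) ∂μ) =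
      (∫ ω, star ((∑ a, ssZeta t Vt τ a * (x ω + ntil (Fin.castLE τ.isLt a) ω)) - x ω) *
          ((∑ a, ssZeta t Vt τ a * (x ω + ntil (Fin.castLE τ.isLt a) ω)) - x ω) ∂μ) := by
  classical
  -- abbreviations
  let B : ∀ k : Fin (t + 1), Matrix (Fin ((k : ℕ) + 1)) (Fin ((k : ℕ) + 1)) ℂ :=
    fun k => ssBlock t Vt k
  let u : ∀ k : Fin (t + 1), Fin ((k : ℕ) + 1) → ℂ := fun k a => ∑ b, (B k)⁻¹ a b
  let d : Fin (t + 1) → ℂ := fun k => ∑ a, u k a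
  have hBapp : ∀ (k : Fin (t + 1)) a b,
      Vt (Fin.castLE k.isLt a) (Fin.castLE k.isLt b) = B k a b := fun k a b => rfl
  have hzeta : ∀ (k : Fin (t + 1)) a, ssZeta t Vt k a = u k a / d k := fun k a => rfl
  -- B k applied to u k gives the all-ones vector
  have hBu : ∀ (k : Fin (t + 1)) (c : Fin ((k : ℕ) + 1)), ∑ b, B k c b * u k b = 1 := by
    intro k c
    have h1 : ∑ b, B k c b * u k b = ∑ e, ∑ b, B k c b * (B k)⁻¹ b e := by
      rw [Finset.sum_comm]
      exact Finset.sum_congr rfl fun b _ => by rw [Finset.mul_sum]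
    rw [h1]
    have hmul : ∀ e, ∑ b, B k c b * (B k)⁻¹ b e = (1 : Matrix _ _ ℂ) c e := by
      intro e
      rw [← Matrix.mul_apply, Matrix.mul_nonsing_inv _ (hinv k)]
    simp only [hmul]
    simp [Matrix.one_apply]
  -- Hermitian symmetry of Vt
  have hherm : ∀ i j, star (Vt i j) = Vt j i := by
    intro i j
    rw [hcov i j, hcov j i]
    rw [show star (∫ ω, star (ntil i ω) * ntil j ω ∂μ)
        = (starRingEnd ℂ) (∫ ω, star (ntil i ω) * ntil j ω ∂μ) from rfl]
    rw [← integral_conj]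
    refine integral_congr_ae (Filter.Eventually.of_forall fun ω => ?_)
    simp [mul_comm]
  -- the total sum d k is nonzero
  have hdne : ∀ k, d k ≠ 0 := by
    intro k hk0
    set w : Ω → ℂ := fun ω => ∑ a, u k a * ntil (Fin.castLE k.isLt a) ω with hw
    have hz : ∫ ω, star (w ω) * w ω ∂μ = 0 := by
      rw [hw]
      rw [ss_key_val hint hcov (u k) (u k)
        (fun a => Fin.castLE k.isLt a) (fun a => Fin.castLE k.isLt a)]
      have h2 : ∀ a : Fin ((k : ℕ) + 1), ∑ b, star (u k a) * u k b *
          Vt (Fin.castLE k.isLt a) (Fin.castLE k.isLt b) = star (u k a) := by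
        intro a
        have h3 : ∑ b, star (u k a) * u k b * Vt (Fin.castLE k.isLt a) (Fin.castLE k.isLt b)
            = star (u k a) * ∑ b, B k a b * u k b := by
          rw [Finset.mul_sum]
          exact Finset.sum_congr rfl fun b _ => by rw [hBapp]; ring
        rw [h3, hBu k a, mul_one]
      simp only [h2, ← star_sum]
      rw [show (∑ a, u k a) = d k from rfl, hk0, star_zero]
    have hiw : Integrable (fun ω => star (w ω) * w ω) μ :=
      ss_key_int hint (u k) (u k) _ _
    -- star w * w is the (complex-coerced) norm-square of w
    have hsq : (fun ω => star (w ω) * w ω)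
        = fun ω => ((‖w ω‖ ^ 2 : ℝ) : ℂ) := by
      funext ω
      rw [show star (w ω) = (starRingEnd ℂ) (w ω) from rfl, Complex.conj_mul']
      push_cast
      ring
    have hcast : ∫ ω, ((‖w ω‖ ^ 2 : ℝ) : ℂ) ∂μ = ((∫ ω, ‖w ω‖ ^ 2 ∂μ : ℝ) : ℂ) :=
      integral_ofReal
    have hz2 : ∫ ω, ‖w ω‖ ^ 2 ∂μ = 0 := by
      rw [hsq, hcast] at hz
      exact_mod_cast hz
    have hiw2 : Integrable (fun ω => ‖w ω‖ ^ 2) μ := by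
      have h12 := hiw.norm
      have hnrm : (fun ω => ‖star (w ω) * w ω‖) = fun ω => ‖w ω‖ ^ 2 := by
        funext ω
        rw [norm_mul, norm_star, sq]
      rwa [hnrm] at h12
    have hnn : 0 ≤ fun ω => ‖w ω‖ ^ 2 := fun ω => sq_nonneg _
    have hw0 : (fun ω => ‖w ω‖ ^ 2) =ᵐ[μ] 0 :=
      (integral_eq_zero_iff_of_nonneg hnn hiw2).mp hz2
    have hwz : w =ᵐ[μ] 0 := by
      filter_upwards [hw0] with ω hω
      have : ‖w ω‖ ^ 2 = 0 := hω
      have : ‖w ω‖ = 0 := by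
        nlinarith [norm_nonneg (w ω)]
      simpa using this
    -- but ∫ star ñ_0 * w = 1, contradiction
    have h1 : ∫ ω, star (∑ _a : Fin 1, (1 : ℂ) * ntil (Fin.castLE k.isLt 0) ω) *
        (∑ b, u k b * ntil (Fin.castLE k.isLt b) ω) ∂μ
        = ∑ _a : Fin 1, ∑ b, star (1 : ℂ) * u k b *
            Vt (Fin.castLE k.isLt 0) (Fin.castLE k.isLt b) :=
      ss_key_val hint hcov _ _ _ _
    have hleft : ∫ ω, star (∑ _a : Fin 1, (1 : ℂ) * ntil (Fin.castLE k.isLt 0) ω) *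
        (∑ b, u k b * ntil (Fin.castLE k.isLt b) ω) ∂μ = 0 := by
      refine integral_eq_zero_of_ae ?_
      filter_upwards [hwz] with ω hω
      rw [hw] at hω
      simp only [Pi.zero_apply] at hω
      simp [hω]
    have hright : ∑ _a : Fin 1, ∑ b, star (1 : ℂ) * u k b *
        Vt (Fin.castLE k.isLt 0) (Fin.castLE k.isLt b) = 1 := by
      rw [Finset.sum_const, Finset.card_univ, Fintype.card_fin, one_smul]
      have h4 : ∑ b, star (1 : ℂ) * u k b * Vt (Fin.castLE k.isLt 0) (Fin.castLE k.isLt b)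
          = ∑ b, B k 0 b * u k b := by
        refine Finset.sum_congr rfl fun b _ => ?_
        rw [hBapp]; simp; ring
      rw [h4, hBu]
    rw [hleft, hright] at h1
    exact one_ne_zero h1.symm
  -- the weights sum to 1
  have hsum : ∀ k, ∑ a, ssZeta t Vt k a = 1 := by
    intro k
    have h5 : ∑ a, ssZeta t Vt k a = (∑ a, u k a) / d k := by
      rw [Finset.sum_div]
      rfl
    rw [h5, show (∑ a, u k a) = d k from rfl]
    exact div_self (hdne k)
  -- the error form
  have herr : ∀ (k : Fin (t + 1)) (ω : Ω),
      (∑ a, ssZeta t Vt k a * (x ω + ntil (Fin.castLE k.isLt a) ω)) - x ω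
        = ∑ a, ssZeta t Vt k a * ntil (Fin.castLE k.isLt a) ω := by
    intro k ω
    have h6 : ∑ a, ssZeta t Vt k a * (x ω + ntil (Fin.castLE k.isLt a) ω)
        = (∑ a, ssZeta t Vt k a) * x ω
          + ∑ a, ssZeta t Vt k a * ntil (Fin.castLE k.isLt a) ω := by
      rw [Finset.sum_mul, ← Finset.sum_add_distrib]
      exact Finset.sum_congr rfl fun a _ => by ring
    rw [h6, hsum k, one_mul]
    ring
  -- main computation
  have main : ∀ τ j : Fin (t + 1), j ≤ τ →
      (∫ ω, star ((∑ a, ssZeta t Vt τ a * (x ω + ntil (Fin.castLE τ.isLt a) ω)) - x ω) *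
          ((∑ a, ssZeta t Vt j a * (x ω + ntil (Fin.castLE j.isLt a) ω)) - x ω) ∂μ)
        = (star (d τ))⁻¹ := by
    intro τ j hjτ
    have hrw : (∫ ω, star ((∑ a, ssZeta t Vt τ a * (x ω + ntil (Fin.castLE τ.isLt a) ω)) - x ω) *
          ((∑ a, ssZeta t Vt j a * (x ω + ntil (Fin.castLE j.isLt a) ω)) - x ω) ∂μ)
        = ∫ ω, star (∑ a, ssZeta t Vt τ a * ntil (Fin.castLE τ.isLt a) ω) *
            (∑ b, ssZeta t Vt j b * ntil (Fin.castLE j.isLt b) ω) ∂μ := by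
      refine integral_congr_ae (Filter.Eventually.of_forall fun ω => ?_)
      beta_reduce
      rw [herr τ ω, herr j ω]
    rw [hrw, ss_key_val hint hcov _ _ _ _]
    -- the row identity
    have hBstar : ∀ (a b : Fin ((τ : ℕ) + 1)), star (B τ a b) = B τ b a := by
      intro a b
      rw [← hBapp, ← hBapp]
      exact hherm _ _
    have hrow : ∀ b : Fin ((τ : ℕ) + 1),
        ∑ a, star (ssZeta t Vt τ a) * B τ a b = (star (d τ))⁻¹ := by
      intro b
      have h7 : ∑ a, star (ssZeta t Vt τ a) * B τ a b
          = (star (d τ))⁻¹ * ∑ a, star (u τ a * star (B τ a b)) := by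
        rw [Finset.mul_sum]
        refine Finset.sum_congr rfl fun a _ => ?_
        rw [hzeta, star_div₀, star_mul', star_star]
        ring
      rw [h7]
      have h8 : ∑ a, star (u τ a * star (B τ a b)) = star (∑ a, B τ b a * u τ a) := by
        rw [star_sum]
        refine Finset.sum_congr rfl fun a _ => ?_
        rw [hBstar, mul_comm]
      have h9 : ∑ a, B τ b a * u τ a = 1 := hBu τ b
      rw [h8, h9, star_one, mul_one]
    -- swap and evaluate
    rw [Finset.sum_comm]
    have h10 : ∀ b : Fin ((j : ℕ) + 1),
        ∑ a, star (ssZeta t Vt τ a) * ssZeta t Vt j b *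
          Vt (Fin.castLE τ.isLt a) (Fin.castLE j.isLt b)
        = ssZeta t Vt j b * (star (d τ))⁻¹ := by
      intro b
      have hb' : (b : ℕ) < (τ : ℕ) + 1 :=
        lt_of_lt_of_le b.isLt (Nat.succ_le_succ hjτ)
      set b' : Fin ((τ : ℕ) + 1) := ⟨(b : ℕ), hb'⟩ with hb'def
      have hcast : Fin.castLE j.isLt b = Fin.castLE τ.isLt b' := by
        apply Fin.ext
        rfl
      have h11 : ∑ a, star (ssZeta t Vt τ a) * ssZeta t Vt j b *
            Vt (Fin.castLE τ.isLt a) (Fin.castLE j.isLt b)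
          = ssZeta t Vt j b * ∑ a, star (ssZeta t Vt τ a) * B τ a b' := by
        rw [Finset.mul_sum]
        refine Finset.sum_congr rfl fun a _ => ?_
        rw [hcast, hBapp]
        ring
      rw [h11, hrow b']
    simp only [h10]
    rw [← Finset.sum_mul, hsum j, one_mul]
  intro i τ hiτ
  rw [main τ i hiτ, main τ τ le_rfl]
end
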